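/- Fix a constant 0<α<1/100. There exists a constant C depending only on α such that for all T≥2 and every real t satisfying |t|≤T^{1−α} or |t|≥2T−T^{1−α}, one has |H(t)·W(t)| ≤ C·T^{−100}. -/

import Mathlib

/-- The weight function H(t) from Watson's formula. -/
noncomputable def Hwt (T t : ℝ) : ℝ :=
  ‖Complex.Gamma ((1 / 2 + 2 * (T : ℂ) * Complex.I + (t : ℂ) * Complex.I) / 2)‖ ^ 2 *
      ‖Complex.Gamma ((1 / 2 + 2 * (T : ℂ) * Complex.I - (t : ℂ) * Complex.I) / 2)‖ ^ 2 *
      ‖Complex.Gamma ((1 / 2 + (t : ℂ) * Complex.I) / 2)‖ ^ 4 /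
    (‖Complex.Gamma ((1 + 2 * (T : ℂ) * Complex.I) / 2)‖ ^ 4 *
      ‖Complex.Gamma ((1 + 2 * (t : ℂ) * Complex.I) / 2)‖ ^ 2)

/-- The smooth cutoff W(t) = W_α(t). -/
noncomputable def Wwt (α T t : ℝ) : ℝ :=
  (1 - Real.exp (-(t / (2 * T) ^ (1 - α / 2)) ^ (2 * ⌈(1000 : ℝ) / α⌉₊))) *
    (1 - Real.exp (-((4 * T ^ 2 - t ^ 2) / (4 * T ^ (2 - α / 2))) ^ (2 * ⌈(1000 : ℝ) / α⌉₊)))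

/-!
On the critical line the reflection formula gives `|Γ(1/2 + iu)|² = π / cosh (πu)` exactly. On a
line `Re s = σ` with `0 < σ < 1/2`, the beta integral
`Γ(s) Γ(1 - 2σ) = B(s, 1 - 2σ) Γ(1 - conj s)` bounds `|Γ(s)|` by `|Γ(1 - s)|`, and reflection
then gives `|Γ(σ + iu)|² ≪ e^{-π|u|}`. Hence `H(t) ≪ exp (-π max(0, |t| - 2T))`: `H` is bounded,
and smaller than any power of `T` once `|t| ≥ 2T + T^{1-α}`. In the remaining range one factor of
`W` is at most `x^{2N}` (as `1 - e^{-y} ≤ y`) with `x ≪ T^{-α/2}` and `αN ≥ 1000`.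
-/

open Real

namespace Complex

lemma norm_betaIntegral_le (s t : ℂ) :
    ‖betaIntegral s t‖ ≤ ∫ x in (0 : ℝ)..1, x ^ (s.re - 1) * (1 - x) ^ (t.re - 1) := by
  refine (intervalIntegral.norm_integral_le_integral_norm zero_le_one).trans (le_of_eq ?_)
  simp only [intervalIntegral.integral_of_le zero_le_one,
    MeasureTheory.integral_Ioc_eq_integral_Ioo]
  refine MeasureTheory.setIntegral_congr_fun measurableSet_Ioo fun x ⟨hx0, hx1⟩ => ?_
  rw [norm_mul, norm_cpow_eq_rpow_re_of_pos hx0, ← ofReal_one, ← ofReal_sub,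
    norm_cpow_eq_rpow_re_of_pos (sub_pos.2 hx1)]
  simp

lemma norm_Gamma_mul_norm_Gamma_le {s t : ℂ} (hs : 0 < s.re) (ht : 0 < t.re) :
    ‖Gamma s‖ * ‖Gamma t‖ ≤
      (∫ x in (0 : ℝ)..1, x ^ (s.re - 1) * (1 - x) ^ (t.re - 1)) * ‖Gamma (s + t)‖ := by
  rw [← norm_mul, Gamma_mul_Gamma_eq_betaIntegral hs ht, norm_mul, mul_comm]
  exact mul_le_mul_of_nonneg_right (norm_betaIntegral_le s t) (norm_nonneg _)

lemma abs_sin_mul_cosh_le_norm_sin (x y : ℝ) :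
    |Real.sin x| * Real.cosh y ≤ ‖sin (x + y * I)‖ := by
  have hre : (sin (x + y * I)).re = Real.sin x * Real.cosh y := by
    simp [sin_add_mul_I, ← ofReal_cosh, ← ofReal_sinh, sin_ofReal_re]
  rw [← abs_of_pos (Real.cosh_pos y), ← abs_mul, ← hre]
  exact abs_re_le_norm _

lemma exists_norm_Gamma_sq_le_mul_exp {σ : ℝ} (hσ0 : 0 < σ) (hσ1 : σ < 1 / 2) :
    ∃ M, ∀ u : ℝ, ‖Gamma (σ + u * I)‖ ^ 2 ≤ M * Real.exp (-(π * |u|)) := by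
  set B := ∫ x in (0 : ℝ)..1, x ^ (σ - 1) * (1 - x) ^ ((1 - 2 * σ) - 1)
  set G := ‖Gamma ((1 - 2 * σ : ℝ))‖
  have hG : 0 < G := norm_pos_iff.2 (Gamma_ne_zero_of_re_pos (by simp; linarith))
  have hsin : 0 < Real.sin (π * σ) :=
    Real.sin_pos_of_pos_of_lt_pi (by positivity) (by nlinarith [pi_pos])
  refine ⟨2 * π * B / (Real.sin (π * σ) * G), fun u => ?_⟩
  set A := ‖Gamma (σ + u * I)‖
  set A' := ‖Gamma ((1 - σ : ℝ) + u * I)‖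
  have hbeta : A * G ≤ B * A' := by
    have := norm_Gamma_mul_norm_Gamma_le (s := σ + u * I) (t := (1 - 2 * σ : ℝ))
      (by simpa using hσ0) (by simp; linarith)
    convert this using 4 <;> simp
    ring
  have hrefl : A * A' = π / ‖sin (π * σ + (π * u) * I)‖ := by
    have h := Gamma_mul_Gamma_one_sub (σ + u * I)
    have hconj : 1 - (σ + u * I) = (starRingEnd ℂ) ((1 - σ : ℝ) + u * I) := by
      apply Complex.ext <;> simp
    rw [hconj, Gamma_conj] at h
    rw [show (π : ℂ) * σ + π * u * I = π * (σ + u * I) by ring]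
    simpa only [norm_mul, RCLike.norm_conj, norm_div, norm_real, Real.norm_eq_abs,
      abs_of_pos pi_pos] using congrArg (‖·‖) h
  set S := ‖sin (π * σ + (π * u) * I)‖
  have hB : 0 ≤ B := intervalIntegral.integral_nonneg zero_le_one fun x hx =>
    mul_nonneg (rpow_nonneg hx.1 _) (rpow_nonneg (sub_nonneg.2 hx.2) _)
  have hS : Real.sin (π * σ) * Real.exp (π * |u|) / 2 ≤ S := by
    have hcosh : Real.exp (π * |u|) / 2 ≤ Real.cosh (π * u) := by
      have := Real.exp_abs_le (π * u)
      rw [abs_mul, abs_of_pos pi_pos] at this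
      rw [Real.cosh_eq]; linarith
    have := abs_sin_mul_cosh_le_norm_sin (π * σ) (π * u)
    rw [abs_of_pos hsin] at this
    push_cast at this
    nlinarith
  have hA : A ^ 2 * G ≤ B * (π / S) := by
    calc A ^ 2 * G = A * (A * G) := by ring
      _ ≤ A * (B * A') := mul_le_mul_of_nonneg_left hbeta (norm_nonneg _)
      _ = B * (A * A') := by ring
      _ = _ := by rw [hrefl]
  have hinv : π / S ≤ 2 * π / Real.sin (π * σ) * Real.exp (-(π * |u|)) :=
    calc π / S ≤ π / (Real.sin (π * σ) * Real.exp (π * |u|) / 2) :=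
          div_le_div_of_nonneg_left pi_pos.le (by positivity) hS
      _ = 2 * π / Real.sin (π * σ) * Real.exp (-(π * |u|)) := by
          rw [Real.exp_neg]; field_simp
  calc A ^ 2 ≤ B * (π / S) / G := (le_div_iff₀ hG).2 hA
    _ ≤ B * (2 * π / Real.sin (π * σ) * Real.exp (-(π * |u|))) / G := by gcongr
    _ = _ := by ring

lemma norm_Gamma_one_half_add_mul_I_sq (u : ℝ) :
    ‖Gamma (1 / 2 + u * I)‖ ^ 2 = π / Real.cosh (π * u) := by
  have hconj : 1 - (1 / 2 + u * I) = (starRingEnd ℂ) (1 / 2 + u * I) := by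
    apply Complex.ext <;> simp; norm_num
  have h := Gamma_mul_Gamma_one_sub (1 / 2 + u * I)
  rw [hconj, Gamma_conj, mul_conj, normSq_eq_norm_sq] at h
  have hsin : sin (π * (1 / 2 + u * I)) = Real.cosh (π * u) := by
    rw [show (π : ℂ) * (1 / 2 + u * I) = π / 2 + (π * u : ℝ) * I by push_cast; ring,
      sin_add_mul_I, sin_pi_div_two, cos_pi_div_two, ofReal_cosh]
    ring
  rw [hsin] at h
  exact_mod_cast h

end Complex

lemma Real.cosh_le_exp_abs (x : ℝ) : Real.cosh x ≤ Real.exp |x| := by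
  rw [← Real.cosh_abs, Real.cosh_eq]
  linarith [Real.exp_le_exp.2 (neg_le_self (abs_nonneg x))]

lemma Hwt_nonneg (T t : ℝ) : 0 ≤ Hwt T t := by
  unfold Hwt; positivity

open Complex in
lemma Hwt_eq (T t : ℝ) :
    Hwt T t = ‖Gamma (1 / 4 + (T + t / 2 : ℝ) * I)‖ ^ 2 *
      ‖Gamma (1 / 4 + (T - t / 2 : ℝ) * I)‖ ^ 2 *
      (‖Gamma (1 / 4 + (t / 2 : ℝ) * I)‖ ^ 2) ^ 2 *
      (Real.cosh (π * T) ^ 2 * Real.cosh (π * t)) / π ^ 3 := by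
  have hT : (1 + 2 * (T : ℂ) * I) / 2 = 1 / 2 + T * I := by ring
  have ht : (1 + 2 * (t : ℂ) * I) / 2 = 1 / 2 + t * I := by ring
  rw [Hwt, hT, ht, show 4 = 2 * 2 by rfl, pow_mul, pow_mul, norm_Gamma_one_half_add_mul_I_sq,
    norm_Gamma_one_half_add_mul_I_sq]
  have hcT := Real.cosh_pos (π * T)
  have hct := Real.cosh_pos (π * t)
  field_simp
  push_cast
  ring_nf

lemma exists_Hwt_le :
    ∃ C, 0 ≤ C ∧ ∀ T t : ℝ, Hwt T t ≤ C * Real.exp (-(π * max 0 (|t| - 2 * |T|))) := by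
  obtain ⟨M, hM⟩ :=
    Complex.exists_norm_Gamma_sq_le_mul_exp (σ := 1 / 4) (by norm_num) (by norm_num)
  push_cast at hM
  have hM0 : 0 ≤ M := by simpa using (sq_nonneg _).trans (hM 0)
  refine ⟨M ^ 4 / π ^ 3, by positivity, fun T t => ?_⟩
  set a := |T + t / 2|
  set b := |T - t / 2|
  have hab : 2 * |T| + max 0 (|t| - 2 * |T|) ≤ a + b := by
    rw [max_def]
    split_ifs <;> cases abs_cases (T + t / 2) <;> cases abs_cases (T - t / 2) <;>
      cases abs_cases t <;> cases abs_cases T <;> linarith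
  have hnum : ‖Complex.Gamma (1 / 4 + (T + t / 2 : ℝ) * Complex.I)‖ ^ 2 *
      ‖Complex.Gamma (1 / 4 + (T - t / 2 : ℝ) * Complex.I)‖ ^ 2 *
      (‖Complex.Gamma (1 / 4 + (t / 2 : ℝ) * Complex.I)‖ ^ 2) ^ 2 ≤
      M ^ 4 * Real.exp (-(π * (a + b + |t|))) :=
    calc _ ≤ M * Real.exp (-(π * a)) * (M * Real.exp (-(π * b))) *
          (M * Real.exp (-(π * |t / 2|))) ^ 2 := by
          have := hM (T + t / 2)
          have := hM (T - t / 2)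
          have := hM (t / 2)
          gcongr
      _ = M ^ 4 *
          (Real.exp (-(π * a)) * Real.exp (-(π * b)) * Real.exp (-(π * |t / 2|)) ^ 2) := by
          ring
      _ = _ := by
          rw [sq, ← Real.exp_add, ← Real.exp_add, ← Real.exp_add, abs_div, abs_two]
          ring_nf
  have hcosh : Real.cosh (π * T) ^ 2 * Real.cosh (π * t) ≤ Real.exp (π * (2 * |T| + |t|)) :=
    calc _ ≤ Real.exp |π * T| ^ 2 * Real.exp |π * t| := by
          have := Real.cosh_le_exp_abs (π * T)
          have := Real.cosh_le_exp_abs (π * t)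
          gcongr
      _ = _ := by
          rw [← Real.exp_nat_mul, ← Real.exp_add, abs_mul, abs_mul, abs_of_pos pi_pos]
          ring_nf
  rw [Hwt_eq]
  calc _ ≤ M ^ 4 * Real.exp (-(π * (a + b + |t|))) * Real.exp (π * (2 * |T| + |t|)) / π ^ 3 :=
        by gcongr
    _ = M ^ 4 / π ^ 3 * Real.exp (-(π * (a + b - 2 * |T|))) := by
        rw [mul_assoc, ← Real.exp_add]
        ring_nf
    _ ≤ _ := by
        gcongr
        linarith

lemma one_sub_exp_neg_nonneg {x : ℝ} (hx : 0 ≤ x) : 0 ≤ 1 - exp (-x) := by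
  linarith [exp_le_one_iff.2 (neg_nonpos.2 hx)]

lemma one_sub_exp_neg_le_one (x : ℝ) : 1 - exp (-x) ≤ 1 := by
  linarith [exp_pos (-x)]

lemma one_sub_exp_neg_le_self (x : ℝ) : 1 - exp (-x) ≤ x := by
  linarith [add_one_le_exp (-x)]

section Cutoff

variable (α T t : ℝ)

lemma Wwt_nonneg : 0 ≤ Wwt α T t :=
  mul_nonneg (one_sub_exp_neg_nonneg ((even_two_mul _).pow_nonneg _))
    (one_sub_exp_neg_nonneg ((even_two_mul _).pow_nonneg _))

lemma Wwt_le_one : Wwt α T t ≤ 1 :=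
  mul_le_one₀ (one_sub_exp_neg_le_one _) (one_sub_exp_neg_nonneg ((even_two_mul _).pow_nonneg _))
    (one_sub_exp_neg_le_one _)

lemma Wwt_le_left :
    Wwt α T t ≤ |t / (2 * T) ^ (1 - α / 2)| ^ (2 * ⌈(1000 : ℝ) / α⌉₊) := by
  rw [(even_two_mul _).pow_abs]
  exact (mul_le_mul (one_sub_exp_neg_le_self _) (one_sub_exp_neg_le_one _)
    (one_sub_exp_neg_nonneg ((even_two_mul _).pow_nonneg _))
    ((even_two_mul _).pow_nonneg _)).trans_eq (mul_one _)

lemma Wwt_le_right :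
    Wwt α T t ≤ |(4 * T ^ 2 - t ^ 2) / (4 * T ^ (2 - α / 2))| ^ (2 * ⌈(1000 : ℝ) / α⌉₊) := by
  rw [(even_two_mul _).pow_abs]
  exact (mul_le_mul (one_sub_exp_neg_le_one _) (one_sub_exp_neg_le_self _)
    (one_sub_exp_neg_nonneg ((even_two_mul _).pow_nonneg _)) zero_le_one).trans_eq (one_mul _)

end Cutoff

lemma rpow_neg_half_pow_ceil_le {α T : ℝ} (hα : 0 < α) (hT : 1 ≤ T) :
    (T ^ (-(α / 2))) ^ (2 * ⌈(1000 : ℝ) / α⌉₊) ≤ T ^ (-100 : ℝ) := by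
  have hN : 1000 ≤ α * ⌈(1000 : ℝ) / α⌉₊ := by
    rw [← div_le_iff₀' hα]; exact Nat.le_ceil _
  rw [← rpow_natCast, ← rpow_mul (by linarith)]
  exact rpow_le_rpow_of_exponent_le hT (by push_cast; nlinarith)

lemma abs_div_two_mul_rpow_le {α T t : ℝ} (hα : α ≤ 2) (hT : 1 ≤ T)
    (ht : |t| ≤ T ^ (1 - α)) :
    |t / (2 * T) ^ (1 - α / 2)| ≤ T ^ (-(α / 2)) := by
  have hT0 : 0 < T := by linarith
  rw [abs_div, abs_of_pos (by positivity : (0 : ℝ) < (2 * T) ^ (1 - α / 2))]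
  calc |t| / (2 * T) ^ (1 - α / 2) ≤ T ^ (1 - α) / T ^ (1 - α / 2) := by
        gcongr
        · linarith
        · linarith
    _ = T ^ (-(α / 2)) := by rw [← rpow_sub hT0]; ring_nf

lemma abs_four_mul_sq_sub_sq_div_le {α T t : ℝ} (hα : 0 ≤ α) (hT : 1 ≤ T)
    (ht₁ : 2 * T - T ^ (1 - α) ≤ |t|) (ht₂ : |t| ≤ 2 * T + T ^ (1 - α)) :
    |(4 * T ^ 2 - t ^ 2) / (4 * T ^ (2 - α / 2))| ≤ 5 / 4 * T ^ (-(α / 2)) := by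
  have hT0 : 0 < T := by linarith
  have hTα : T ^ (1 - α) ≤ T := by
    simpa using rpow_le_rpow_of_exponent_le hT (by linarith : 1 - α ≤ 1)
  have hdiff : abs (2 * T - |t|) ≤ T ^ (1 - α) := abs_le.2 ⟨by linarith, by linarith⟩
  have hsum : 2 * T + |t| ≤ 5 * T := by linarith
  have hfactor : |4 * T ^ 2 - t ^ 2| = abs (2 * T - |t|) * (2 * T + |t|) := by
    rw [← abs_of_nonneg (by positivity : 0 ≤ 2 * T + |t|), ← abs_mul, ← sq_abs t]
    ring_nf
  rw [abs_div, abs_of_pos (by positivity : (0 : ℝ) < 4 * T ^ (2 - α / 2)),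
    div_le_iff₀ (by positivity), hfactor]
  calc abs (2 * T - |t|) * (2 * T + |t|) ≤ T ^ (1 - α) * (5 * T) := by gcongr
    _ = 5 / 4 * T ^ (-(α / 2)) * (4 * T ^ (2 - α / 2)) := by
        rw [show 5 / 4 * T ^ (-(α / 2)) * (4 * T ^ (2 - α / 2)) =
            5 * (T ^ (-(α / 2)) * T ^ (2 - α / 2)) by ring, ← rpow_add hT0]
        nth_rewrite 2 [← rpow_one T]
        rw [mul_comm, mul_assoc, ← rpow_add hT0]
        ring_nf

lemma exp_neg_rpow_le {α T : ℝ} (hα : α ≤ 1 / 2) (hT : 1 ≤ T) :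
    exp (-T ^ (1 - α)) ≤ (Nat.factorial 200 : ℝ) * T ^ (-100 : ℝ) := by
  have hT0 : 0 < T := by linarith
  have hpow : T ^ (100 : ℝ) ≤ (T ^ (1 - α)) ^ 200 := by
    rw [← rpow_natCast, ← rpow_mul hT0.le]
    exact rpow_le_rpow_of_exponent_le hT (by push_cast; linarith)
  have hexp : T ^ (100 : ℝ) / (Nat.factorial 200 : ℝ) ≤ exp (T ^ (1 - α)) :=
    (div_le_div_of_nonneg_right hpow (by positivity)).trans
      (pow_div_factorial_le_exp _ (by positivity) 200)
  rw [exp_neg, rpow_neg hT0.le, ← div_eq_mul_inv, ← inv_div]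
  exact inv_anti₀ (by positivity) hexp

lemma exp_neg_pi_mul_max_le {α T t : ℝ} (hα : α ≤ 1 / 2) (hT : 1 ≤ T)
    (ht : 2 * T + T ^ (1 - α) < |t|) :
    exp (-(π * max 0 (|t| - 2 * |T|))) ≤ (Nat.factorial 200 : ℝ) * T ^ (-100 : ℝ) := by
  refine le_trans (exp_le_exp.2 ?_) (exp_neg_rpow_le hα hT)
  rw [abs_of_pos (by linarith : 0 < T)]
  nlinarith [le_max_right 0 (|t| - 2 * T), pi_gt_three,
    rpow_nonneg (by linarith : 0 ≤ T) (1 - α)]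

lemma Wwt_le_of_abs_le {α T t : ℝ} (hα0 : 0 < α) (hα2 : α ≤ 2) (hT : 1 ≤ T)
    (ht : |t| ≤ T ^ (1 - α)) : Wwt α T t ≤ T ^ (-100 : ℝ) :=
  (Wwt_le_left α T t).trans <|
    (pow_le_pow_left₀ (abs_nonneg _) (abs_div_two_mul_rpow_le hα2 hT ht) _).trans
      (rpow_neg_half_pow_ceil_le hα0 hT)

lemma Wwt_le_of_near_two_mul {α T t : ℝ} (hα0 : 0 < α) (hT : 1 ≤ T)
    (ht₁ : 2 * T - T ^ (1 - α) ≤ |t|) (ht₂ : |t| ≤ 2 * T + T ^ (1 - α)) :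
    Wwt α T t ≤ (5 / 4) ^ (2 * ⌈(1000 : ℝ) / α⌉₊) * T ^ (-100 : ℝ) := by
  calc Wwt α T t ≤ _ := Wwt_le_right α T t
    _ ≤ (5 / 4 * T ^ (-(α / 2))) ^ (2 * ⌈(1000 : ℝ) / α⌉₊) :=
        pow_le_pow_left₀ (abs_nonneg _) (abs_four_mul_sq_sub_sq_div_le hα0.le hT ht₁ ht₂) _
    _ ≤ _ := by rw [mul_pow]; gcongr; exact rpow_neg_half_pow_ceil_le hα0 hT

/-- H(t)W(t) ≪ T^{-100} unless T^{1-α} < |t| < 2T - T^{1-α}. -/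
theorem stmt_3 (α : ℝ) (hα0 : 0 < α) (hα1 : α < 1 / 100) :
    ∃ C : ℝ, ∀ T : ℝ, 2 ≤ T → ∀ t : ℝ,
      (|t| ≤ T ^ (1 - α) ∨ 2 * T - T ^ (1 - α) ≤ |t|) →
      |Hwt T t * Wwt α T t| ≤ C * T ^ (-100 : ℝ) := by
  obtain ⟨C₀, hC₀, hH⟩ := exists_Hwt_le
  set K : ℝ := (5 / 4) ^ (2 * ⌈(1000 : ℝ) / α⌉₊)
  refine ⟨C₀ * (K + Nat.factorial 200), fun T hT t ht => ?_⟩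
  have hT1 : 1 ≤ T := by linarith
  have hK : 1 ≤ K := one_le_pow₀ (by norm_num)
  have hHC : Hwt T t ≤ C₀ :=
    (hH T t).trans (mul_le_of_le_one_right hC₀ (exp_le_one_iff.2 (neg_nonpos.2 (by positivity))))
  rw [abs_of_nonneg (mul_nonneg (Hwt_nonneg T t) (Wwt_nonneg α T t))]
  by_cases hfar : 2 * T + T ^ (1 - α) < |t|
  · have hHfar : Hwt T t ≤ C₀ * (Nat.factorial 200 * T ^ (-100 : ℝ)) :=
      (hH T t).trans <|
        mul_le_mul_of_nonneg_left (exp_neg_pi_mul_max_le (by linarith) hT1 hfar) hC₀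
    calc Hwt T t * Wwt α T t ≤ C₀ * (Nat.factorial 200 * T ^ (-100 : ℝ)) * 1 :=
          mul_le_mul hHfar (Wwt_le_one α T t) (Wwt_nonneg α T t) (by positivity)
      _ ≤ _ := by
          rw [mul_one, ← mul_assoc]; gcongr; exact le_add_of_nonneg_left (by positivity)
  have hW : Wwt α T t ≤ K * T ^ (-100 : ℝ) := by
    rcases ht with hsmall | hlarge
    · exact (Wwt_le_of_abs_le hα0 (by linarith) hT1 hsmall).trans
        (le_mul_of_one_le_left (by positivity) hK)
    · exact Wwt_le_of_near_two_mul hα0 hT1 hlarge (not_lt.1 hfar)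
  calc Hwt T t * Wwt α T t ≤ C₀ * (K * T ^ (-100 : ℝ)) :=
        mul_le_mul hHC hW (Wwt_nonneg α T t) hC₀
    _ ≤ _ := by rw [← mul_assoc]; gcongr; exact le_add_of_nonneg_right (Nat.cast_nonneg _)
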